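/- Extending a subpath cannot decrease its minimax regret as an assumed dominant part: for 0 ≤ l ≤ r < n one has R_{lr} ≤ R_{l(r+1)}, and for 0 < l ≤ r ≤ n one has R_{lr} ≤ R_{(l−1)r}. -/

import Mathlib

/-- Maximum of `f` over a finite set of indices, with the empty maximum being `0`. -/
noncomputable def maxOver (S : Finset ℕ) (f : ℕ → ℝ) : ℝ := S.fold max 0 f

/-- Left evacuation time to sink `x t` of the subpath starting at `x l`, under weights `w`. -/
noncomputable def thetaL (x : ℕ → ℝ) (τ : ℝ) (w : ℕ → ℝ) (l t : ℕ) : ℝ :=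
  maxOver (Finset.Ico l t) (fun i => (x t - x i) * τ + ∑ j ∈ Finset.Icc l i, w j)

/-- Right evacuation time to sink `x t` of the subpath ending at `x r`, under weights `w`. -/
noncomputable def thetaR (x : ℕ → ℝ) (τ : ℝ) (w : ℕ → ℝ) (t r : ℕ) : ℝ :=
  maxOver (Finset.Ioc t r) (fun i => (x i - x t) * τ + ∑ j ∈ Finset.Icc i r, w j)

/-- 1-sink evacuation time `Θ¹([x_l,x_r], x_t, w)`. -/
noncomputable def theta1 (x : ℕ → ℝ) (τ : ℝ) (w : ℕ → ℝ) (l t r : ℕ) : ℝ :=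
  max (thetaL x τ w l t) (thetaR x τ w t r)

/-- A scenario assigns each vertex a weight within its bounds. -/
def IsScenario (n : ℕ) (wlo whi : ℕ → ℝ) (s : ℕ → ℝ) : Prop :=
  ∀ i, i ≤ n → wlo i ≤ s i ∧ s i ≤ whi i

/-- A `k`-partition-with-sinks of the vertex set `{0,…,n}` into `k` consecutive
nonempty blocks `{l p, …, r p}` (`p ∈ {1,…,k}`) with a sink `t p` in each block. -/
structure KPartSinks (n k : ℕ) where
  l : ℕ → ℕ
  r : ℕ → ℕ
  t : ℕ → ℕ
  first : l 1 = 0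
  last : r k = n
  consec : ∀ p, 1 ≤ p → p < k → l (p + 1) = r p + 1
  block_nonempty : ∀ p, 1 ≤ p → p ≤ k → l p ≤ r p
  sink_lb : ∀ p, 1 ≤ p → p ≤ k → l p ≤ t p
  sink_ub : ∀ p, 1 ≤ p → p ≤ k → t p ≤ r p

/-- `k`-sink evacuation time `Θᵏ(P, {P̂,Ŷ}, w)`. -/
noncomputable def thetaK {n k : ℕ} (x : ℕ → ℝ) (τ : ℝ) (PY : KPartSinks n k) (w : ℕ → ℝ) : ℝ :=
  maxOver (Finset.Icc 1 k) (fun p => theta1 x τ w (PY.l p) (PY.t p) (PY.r p))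

/-- Optimal `k`-sink evacuation time `Θᵏ_opt(P, w)`. -/
noncomputable def thetaOpt (x : ℕ → ℝ) (τ : ℝ) (n k : ℕ) (w : ℕ → ℝ) : ℝ :=
  sInf {v : ℝ | ∃ PY : KPartSinks n k, thetaK x τ PY w = v}

/-- Regret `R({P̂,Ŷ}, w)`. -/
noncomputable def regret {n k : ℕ} (x : ℕ → ℝ) (τ : ℝ) (PY : KPartSinks n k) (w : ℕ → ℝ) : ℝ :=
  thetaK x τ PY w - thetaOpt x τ n k w

/-- Max-regret `R_max({P̂,Ŷ})`. -/
noncomputable def maxRegret {n k : ℕ} (x : ℕ → ℝ) (τ : ℝ) (wlo whi : ℕ → ℝ)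
    (PY : KPartSinks n k) : ℝ :=
  sSup {v : ℝ | ∃ s : ℕ → ℝ, IsScenario n wlo whi s ∧ regret x τ PY s = v}

/-- A worst-case scenario: a scenario attaining the max-regret. -/
def IsWorstCase {n k : ℕ} (x : ℕ → ℝ) (τ : ℝ) (wlo whi : ℕ → ℝ) (PY : KPartSinks n k)
    (s : ℕ → ℝ) : Prop :=
  IsScenario n wlo whi s ∧ regret x τ PY s = maxRegret x τ wlo whi PY

/-- `d` is the index of the dominant part of `{P̂,Ŷ}` under weights `w`:
the smallest index attaining `max_p Θ¹(P_p, y_p, w)`. -/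
def IsDominant {n k : ℕ} (x : ℕ → ℝ) (τ : ℝ) (PY : KPartSinks n k) (w : ℕ → ℝ) (d : ℕ) : Prop :=
  1 ≤ d ∧ d ≤ k ∧
  (∀ p, 1 ≤ p → p ≤ k →
    theta1 x τ w (PY.l p) (PY.t p) (PY.r p) ≤ theta1 x τ w (PY.l d) (PY.t d) (PY.r d)) ∧
  (∀ p, 1 ≤ p → p < d →
    theta1 x τ w (PY.l p) (PY.t p) (PY.r p) < theta1 x τ w (PY.l d) (PY.t d) (PY.r d))

/-- `R_{lr}(x_t)`: the max-regret of the subpath `[x_l,x_r]` as assumed dominant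
part with sink `x_t`. -/
noncomputable def Rsink (x : ℕ → ℝ) (τ : ℝ) (wlo whi : ℕ → ℝ) (n k : ℕ) (l r t : ℕ) : ℝ :=
  sSup {v : ℝ | ∃ s : ℕ → ℝ, IsScenario n wlo whi s ∧
    theta1 x τ s l t r - thetaOpt x τ n k s = v}

/-- `R_{lr}`: the minimax regret of the subpath `[x_l,x_r]` as assumed dominant part. -/
noncomputable def Rlr (x : ℕ → ℝ) (τ : ℝ) (wlo whi : ℕ → ℝ) (n k : ℕ) (l r : ℕ) : ℝ :=
  sInf {v : ℝ | ∃ t, l ≤ t ∧ t ≤ r ∧ Rsink x τ wlo whi n k l r t = v}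

/-- A partition of `{0,…,i}` into `q` consecutive nonempty blocks `{l p, …, r p}`. -/
def IsQPartition (q i : ℕ) (l r : ℕ → ℕ) : Prop :=
  l 1 = 0 ∧ r q = i ∧ (∀ p, 1 ≤ p → p < q → l (p + 1) = r p + 1) ∧
  (∀ p, 1 ≤ p → p ≤ q → l p ≤ r p)

/-- `M(q, i)`: the minimum over partitions of `{0,…,i}` into `q` consecutive
nonempty blocks of `max_p R_{l_p r_p}`. -/
noncomputable def Mreg (x : ℕ → ℝ) (τ : ℝ) (wlo whi : ℕ → ℝ) (n k : ℕ) (q i : ℕ) : ℝ :=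
  sInf {v : ℝ | ∃ lf rf : ℕ → ℕ, IsQPartition q i lf rf ∧
    maxOver (Finset.Icc 1 q) (fun p => Rlr x τ wlo whi n k (lf p) (rf p)) = v}

/-- Left-dominant scenario on `{l,…,r}`. -/
def LeftDominant (wlo whi s : ℕ → ℝ) (l r : ℕ) : Prop :=
  ∃ i, l ≤ i ∧ i ≤ r + 1 ∧ (∀ j, l ≤ j → j < i → s j = whi j) ∧
    (∀ j, i ≤ j → j ≤ r → s j = wlo j)

/-- Right-dominant scenario on `{l,…,r}`. -/
def RightDominant (wlo whi s : ℕ → ℝ) (l r : ℕ) : Prop :=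
  ∃ i, l ≤ i ∧ i ≤ r + 1 ∧ (∀ j, l ≤ j → j < i → s j = wlo j) ∧
    (∀ j, i ≤ j → j ≤ r → s j = whi j)

/-! A subpath `[x_l, x_r] ⊆ [x_l', x_r']` is compared with the larger one sink by sink: a sink
`x_t'` of the larger subpath is clamped into `[l, r]`. Under every scenario this does not increase
the evacuation time, because all weights are nonnegative and, when `t'` lies outside `[l, r]`, the
clamped sink is nearer to every vertex on its side. Hence `R_{lr}(x_t) ≤ R_{l'r'}(x_t')` for the
clamped `t`, and minimizing over `t'` gives `R_{lr} ≤ R_{l'r'}`. -/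

lemma maxOver_nonneg (S : Finset ℕ) (f : ℕ → ℝ) : 0 ≤ maxOver S f :=
  (Finset.le_fold_max _).2 (Or.inl le_rfl)

lemma maxOver_le_maxOver {S T : Finset ℕ} {f g : ℕ → ℝ} (hST : S ⊆ T)
    (h : ∀ i ∈ S, f i ≤ g i) : maxOver S f ≤ maxOver T g :=
  (Finset.fold_max_le _).2 ⟨maxOver_nonneg T g, fun i hi =>
    (h i hi).trans ((Finset.le_fold_max _).2 (Or.inr ⟨i, hST hi, le_rfl⟩))⟩

section Evacuation

variable {x : ℕ → ℝ} {τ : ℝ} {w : ℕ → ℝ}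

lemma thetaL_self (l : ℕ) : thetaL x τ w l l = 0 := by
  simp [thetaL, maxOver]

lemma thetaR_self (r : ℕ) : thetaR x τ w r r = 0 := by
  simp [thetaR, maxOver]

lemma thetaL_le_thetaL_of_le_start {l l' : ℕ} (t : ℕ) (hl : l' ≤ l)
    (hw : ∀ j, l' ≤ j → j < l → 0 ≤ w j) : thetaL x τ w l t ≤ thetaL x τ w l' t := by
  refine maxOver_le_maxOver (Finset.Ico_subset_Ico hl le_rfl) fun i _ => ?_
  refine add_le_add le_rfl ?_
  refine Finset.sum_le_sum_of_subset_of_nonneg (Finset.Icc_subset_Icc hl le_rfl) fun j hj hj' => ?_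
  simp only [Finset.mem_Icc] at hj hj'
  exact hw j hj.1 (by omega)

lemma thetaR_le_thetaR_of_le_end {r r' : ℕ} (t : ℕ) (hr : r ≤ r')
    (hw : ∀ j, r < j → j ≤ r' → 0 ≤ w j) : thetaR x τ w t r ≤ thetaR x τ w t r' := by
  refine maxOver_le_maxOver (Finset.Ioc_subset_Ioc le_rfl hr) fun i _ => ?_
  refine add_le_add le_rfl ?_
  refine Finset.sum_le_sum_of_subset_of_nonneg (Finset.Icc_subset_Icc le_rfl hr) fun j hj hj' => ?_
  simp only [Finset.mem_Icc] at hj hj'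
  exact hw j (by omega) hj.2

lemma thetaL_le_thetaL_of_le_sink {t t' : ℕ} (l : ℕ) (ht : t ≤ t') (hx : x t ≤ x t')
    (hτ : 0 ≤ τ) : thetaL x τ w l t ≤ thetaL x τ w l t' :=
  maxOver_le_maxOver (Finset.Ico_subset_Ico le_rfl ht) fun _ _ => by gcongr

lemma thetaR_le_thetaR_of_le_sink {t t' : ℕ} (r : ℕ) (ht : t' ≤ t) (hx : x t' ≤ x t)
    (hτ : 0 ≤ τ) : thetaR x τ w t r ≤ thetaR x τ w t' r :=
  maxOver_le_maxOver (Finset.Ioc_subset_Ioc ht le_rfl) fun _ _ => by gcongr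

lemma theta1_le_theta1_of_le_weights {w' : ℕ → ℝ} {l t r : ℕ} (htr : t ≤ r)
    (h : ∀ j, j ≤ r → w j ≤ w' j) : theta1 x τ w l t r ≤ theta1 x τ w' l t r := by
  apply max_le_max
  · refine maxOver_le_maxOver subset_rfl fun i hi => ?_
    gcongr with j hj
    simp only [Finset.mem_Ico, Finset.mem_Icc] at hi hj
    exact h j (by omega)
  · refine maxOver_le_maxOver subset_rfl fun i hi => ?_
    gcongr with j hj
    simp only [Finset.mem_Ioc, Finset.mem_Icc] at hi hj
    exact h j hj.2

lemma exists_sink_theta1_le {l r l' r' t' : ℕ} (hl : l' ≤ l) (hlr : l ≤ r) (hr : r ≤ r')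
    (ht' : t' ∈ Set.Icc l' r') (hx : MonotoneOn x (Set.Icc l' r')) (hτ : 0 ≤ τ) :
    ∃ t, l ≤ t ∧ t ≤ r ∧ ∀ w : ℕ → ℝ, (∀ j, l' ≤ j → j ≤ r' → 0 ≤ w j) →
      theta1 x τ w l t r ≤ theta1 x τ w l' t' r' := by
  obtain ⟨hlt', ht'r⟩ := ht'
  have mem : ∀ {j}, l' ≤ j → j ≤ r' → j ∈ Set.Icc l' r' := fun h1 h2 => ⟨h1, h2⟩
  rcases lt_or_ge t' l with hbelow | hin
  · refine ⟨l, le_rfl, hlr, fun w hw => max_le_max ?_ ?_⟩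
    · exact (thetaL_self l).trans_le (maxOver_nonneg _ _)
    · calc thetaR x τ w l r ≤ thetaR x τ w t' r :=
            thetaR_le_thetaR_of_le_sink r hbelow.le
              (hx (mem hlt' ht'r) (mem hl (hlr.trans hr)) hbelow.le) hτ
        _ ≤ thetaR x τ w t' r' := thetaR_le_thetaR_of_le_end t' hr fun j _ hj => hw j (by omega) hj
  rcases le_or_gt t' r with hin' | habove
  · refine ⟨t', hin, hin', fun w hw => max_le_max ?_ ?_⟩
    · exact thetaL_le_thetaL_of_le_start t' hl fun j hj _ => hw j hj (by omega)
    · exact thetaR_le_thetaR_of_le_end t' hr fun j _ hj => hw j (by omega) hj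
  · refine ⟨r, hlr, le_rfl, fun w hw => max_le_max ?_ ?_⟩
    · calc thetaL x τ w l r ≤ thetaL x τ w l' r :=
            thetaL_le_thetaL_of_le_start r hl fun j hj _ => hw j hj (by omega)
        _ ≤ thetaL x τ w l' t' :=
            thetaL_le_thetaL_of_le_sink l' habove.le
              (hx (mem (hl.trans hlr) hr) (mem hlt' ht'r) habove.le) hτ
    · exact (thetaR_self r).trans_le (maxOver_nonneg _ _)

end Evacuation

section Regret

variable {x : ℕ → ℝ} {τ : ℝ} {wlo whi : ℕ → ℝ} {n k : ℕ}

lemma IsScenario.nonneg {s : ℕ → ℝ} (hs : IsScenario n wlo whi s)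
    (hw : ∀ i, i ≤ n → 0 ≤ wlo i) {j : ℕ} (hj : j ≤ n) : 0 ≤ s j :=
  (hw j hj).trans (hs j hj).1

lemma thetaOpt_nonneg (w : ℕ → ℝ) : 0 ≤ thetaOpt x τ n k w :=
  Real.sInf_nonneg fun _ ⟨_, hv⟩ => hv ▸ maxOver_nonneg _ _

lemma bddAbove_regrets {l t r : ℕ} (htr : t ≤ r) (hrn : r ≤ n) :
    BddAbove {v : ℝ | ∃ s : ℕ → ℝ, IsScenario n wlo whi s ∧
      theta1 x τ s l t r - thetaOpt x τ n k s = v} := by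
  refine ⟨theta1 x τ whi l t r, ?_⟩
  rintro _ ⟨s, hs, rfl⟩
  have hs_le : theta1 x τ s l t r ≤ theta1 x τ whi l t r :=
    theta1_le_theta1_of_le_weights htr fun j hj => (hs j (hj.trans hrn)).2
  linarith [thetaOpt_nonneg (x := x) (τ := τ) (n := n) (k := k) s]

lemma Rsink_le_Rsink {l r t l' r' t' : ℕ} (hw : ∀ i, i ≤ n → wlo i ≤ whi i)
    (ht' : t' ≤ r') (hr' : r' ≤ n)
    (h : ∀ s, IsScenario n wlo whi s → theta1 x τ s l t r ≤ theta1 x τ s l' t' r') :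
    Rsink x τ wlo whi n k l r t ≤ Rsink x τ wlo whi n k l' r' t' := by
  refine csSup_le ⟨_, wlo, fun i hi => ⟨le_rfl, hw i hi⟩, rfl⟩ ?_
  rintro _ ⟨s, hs, rfl⟩
  exact (sub_le_sub_right (h s hs) _).trans (le_csSup (bddAbove_regrets ht' hr') ⟨s, hs, rfl⟩)

lemma Rlr_le_Rlr {l r l' r' : ℕ} (hlr' : l' ≤ r')
    (h : ∀ t', l' ≤ t' → t' ≤ r' →
      ∃ t, l ≤ t ∧ t ≤ r ∧ Rsink x τ wlo whi n k l r t ≤ Rsink x τ wlo whi n k l' r' t') :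
    Rlr x τ wlo whi n k l r ≤ Rlr x τ wlo whi n k l' r' := by
  have hbdd : BddBelow {v : ℝ | ∃ t, l ≤ t ∧ t ≤ r ∧ Rsink x τ wlo whi n k l r t = v} := by
    refine (((Set.finite_Icc l r).image (Rsink x τ wlo whi n k l r)).subset ?_).bddBelow
    rintro _ ⟨t, hlt, htr, rfl⟩
    exact ⟨t, ⟨hlt, htr⟩, rfl⟩
  refine le_csInf ⟨_, l', le_rfl, hlr', rfl⟩ ?_
  rintro _ ⟨t', hlt', ht'r, rfl⟩
  obtain ⟨t, hlt, htr, hle⟩ := h t' hlt' ht'r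
  exact (csInf_le hbdd ⟨t, hlt, htr, rfl⟩).trans hle

theorem Rlr_le_Rlr_of_subset {l r l' r' : ℕ} (hl : l' ≤ l) (hlr : l ≤ r) (hr : r ≤ r')
    (hrn : r' ≤ n) (hx : MonotoneOn x (Set.Icc l' r')) (hτ : 0 ≤ τ)
    (hw : ∀ i, i ≤ n → 0 ≤ wlo i ∧ wlo i ≤ whi i) :
    Rlr x τ wlo whi n k l r ≤ Rlr x τ wlo whi n k l' r' := by
  refine Rlr_le_Rlr (hl.trans (hlr.trans hr)) fun t' hlt' ht'r => ?_
  obtain ⟨t, hlt, htr, hle⟩ := exists_sink_theta1_le hl hlr hr ⟨hlt', ht'r⟩ hx hτ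
  refine ⟨t, hlt, htr, Rsink_le_Rsink (fun i hi => (hw i hi).2) ht'r hrn fun s hs => ?_⟩
  exact hle s fun j _ hj => hs.nonneg (fun i hi => (hw i hi).1) (hj.trans hrn)

end Regret

theorem stmt_5_general (n k : ℕ) (x : ℕ → ℝ) (τ : ℝ) (wlo whi : ℕ → ℝ)
    (hx : ∀ i, i < n → x i < x (i + 1)) (hτ : 0 < τ)
    (hw : ∀ i, i ≤ n → 0 < wlo i ∧ wlo i ≤ whi i)
    (l r : ℕ) (hlr : l ≤ r) :
    (r < n → Rlr x τ wlo whi n k l r ≤ Rlr x τ wlo whi n k l (r + 1)) ∧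
    (0 < l → r ≤ n → Rlr x τ wlo whi n k l r ≤ Rlr x τ wlo whi n k (l - 1) r) := by
  have hmono : MonotoneOn x (Set.Iic n) := (strictMonoOn_Iic_of_lt_succ hx).monotoneOn
  have hw' : ∀ i, i ≤ n → 0 ≤ wlo i ∧ wlo i ≤ whi i := fun i hi => ⟨(hw i hi).1.le, (hw i hi).2⟩
  have hmonoOn : ∀ {a b}, b ≤ n → MonotoneOn x (Set.Icc a b) := fun hb =>
    hmono.mono fun _ hj => hj.2.trans hb
  refine ⟨fun hrn => ?_, fun hl hrn => ?_⟩
  · exact Rlr_le_Rlr_of_subset le_rfl hlr r.le_succ hrn (hmonoOn hrn) hτ.le hw'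
  · exact Rlr_le_Rlr_of_subset (Nat.sub_le l 1) hlr le_rfl hrn (hmonoOn hrn) hτ.le hw'

/-- extending a subpath cannot decrease its minimax regret as an
assumed dominant part. -/
theorem stmt_5 (n k : ℕ) (x : ℕ → ℝ) (τ : ℝ) (wlo whi : ℕ → ℝ)
    (hx : ∀ i, i < n → x i < x (i + 1)) (hτ : 0 < τ)
    (hw : ∀ i, i ≤ n → 0 < wlo i ∧ wlo i ≤ whi i) (hk : 1 ≤ k)
    (l r : ℕ) (hlr : l ≤ r) :
    (r < n → Rlr x τ wlo whi n k l r ≤ Rlr x τ wlo whi n k l (r + 1)) ∧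
    (0 < l → r ≤ n → Rlr x τ wlo whi n k l r ≤ Rlr x τ wlo whi n k (l - 1) r) :=
  stmt_5_general n k x τ wlo whi hx hτ hw l r hlr
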